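/- For every δ ∈ (0,1) there exists a constant C = C(δ) > 0 such that for every integer n ≥ 1, (1/A_n^δ) · ∫_{Γ₂} | Σ_{k=0}^{n} A_{n−k}^{δ−1} · D*_k(u1,u2) | du1 du2 ≤ C · log(n+1), where Γ₂ = {(u1,u2) ∈ Γ : u1 ≥ 1/(n+1), u2 ≤ 1/(3(n+1))}. -/

import Mathlib

open MeasureTheory Finset

/-- The triangle `Γ = {(u₁,u₂) : 0 ≤ u₂ ≤ u₁/3, 0 ≤ u₁ ≤ 1}`. -/
def GammaT : Set (ℝ × ℝ) := {u | 0 ≤ u.2 ∧ u.2 ≤ u.1 / 3 ∧ 0 ≤ u.1 ∧ u.1 ≤ 1}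

open Finset in
/-- Cesàro numbers: `A_n^δ = (δ+1)(δ+2)⋯(δ+n)/n!`, with `A_0^δ = 1`. -/
noncomputable def cesaroA (δ : ℝ) (n : ℕ) : ℝ :=
  (∏ i ∈ Finset.range n, (δ + i + 1)) / n.factorial

/-- The transformed hexagonal Dirichlet kernel `D*_k`. -/
noncomputable def DstarK (k : ℕ) (u : ℝ × ℝ) : ℝ :=
  (Real.sin (((k : ℝ) + 1) * Real.pi * u.2) *
      Real.sin (((k : ℝ) + 1) * Real.pi * (u.1 + u.2) / 2) *
      Real.sin (((k : ℝ) + 1) * Real.pi * (u.1 - u.2) / 2) -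
    Real.sin ((k : ℝ) * Real.pi * u.2) *
      Real.sin ((k : ℝ) * Real.pi * (u.1 + u.2) / 2) *
      Real.sin ((k : ℝ) * Real.pi * (u.1 - u.2) / 2)) /
    (Real.sin (Real.pi * u.2) * Real.sin (Real.pi * (u.1 + u.2) / 2) *
      Real.sin (Real.pi * (u.1 - u.2) / 2))

/-! Write `D*_k = (S_{k+1} - S_k) / S_1` with
`S_x(u) = sin(xπu₂) sin(xπ(u₁+u₂)/2) sin(xπ(u₁-u₂)/2)`. For `k ≤ n` each difference is
`O(u₂ (n+1) u₁)` on `Γ₂`, by the Lipschitz bounds for `sin` and `cos`, while Jordan's inequality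
gives `S_1(u) ≥ (8/9) u₂ u₁²` on `Γ`. The weights `A_{n-k}^{δ-1}` are nonnegative and sum to
`A_n^δ`, so the Cesàro mean is `O(A_n^δ (n+1) / u₁)`, and integrating `1/u₁` over
`[1/(n+1), 1] × [0, 1/(3(n+1))]` produces the factor `log(n+1) / (3(n+1))`. -/

open Real Set

lemma cesaroA_nonneg {δ : ℝ} (hδ : -1 ≤ δ) (n : ℕ) : 0 ≤ cesaroA δ n :=
  div_nonneg (Finset.prod_nonneg fun i _ => by linarith [i.cast_nonneg (α := ℝ)])
    (Nat.cast_nonneg _)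

lemma one_le_cesaroA {δ : ℝ} (hδ : 0 ≤ δ) (n : ℕ) : 1 ≤ cesaroA δ n := by
  rw [cesaroA, le_div_iff₀ (by positivity), one_mul, ← Finset.prod_range_add_one_eq_factorial]
  push_cast
  exact Finset.prod_le_prod (fun i _ => by positivity) fun i _ => by linarith

lemma cesaroA_succ (δ : ℝ) (n : ℕ) :
    cesaroA δ (n + 1) = cesaroA δ n + cesaroA (δ - 1) (n + 1) := by
  have hshift : ∏ i ∈ Finset.range (n + 1), (δ - 1 + i + 1) =
      δ * ∏ i ∈ Finset.range n, (δ + i + 1) := by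
    rw [Finset.prod_range_succ']
    push_cast
    ring_nf
  simp only [cesaroA, hshift, Finset.prod_range_succ, Nat.factorial_succ]
  push_cast
  field_simp
  ring

lemma sum_range_cesaroA_sub_one (δ : ℝ) (n : ℕ) :
    ∑ k ∈ Finset.range (n + 1), cesaroA (δ - 1) (n - k) = cesaroA δ n := by
  rw [← Finset.sum_range_reflect (fun k => cesaroA (δ - 1) (n - k))]
  simp only [add_tsub_cancel_right]
  rw [Finset.sum_congr rfl fun k hk => by
    rw [Nat.sub_sub_self (Nat.lt_succ_iff.mp (Finset.mem_range.mp hk))]]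
  induction n with
  | zero => simp [cesaroA]
  | succ m ih => rw [Finset.sum_range_succ, ih, cesaroA_succ δ m]

noncomputable def hexSine (x : ℝ) (u : ℝ × ℝ) : ℝ :=
  sin (x * π * u.2) * sin (x * π * (u.1 + u.2) / 2) * sin (x * π * (u.1 - u.2) / 2)

lemma DstarK_eq_hexSine (k : ℕ) (u : ℝ × ℝ) :
    DstarK k u = (hexSine (k + 1) u - hexSine k u) / hexSine 1 u := by
  simp only [DstarK, hexSine, one_mul]

lemma hexSine_eq (x : ℝ) (u : ℝ × ℝ) :
    hexSine x u = sin (x * π * u.2) * (cos (x * π * u.2) - cos (x * π * u.1)) / 2 := by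
  have hsum : (x * π * u.2 + x * π * u.1) / 2 = x * π * (u.1 + u.2) / 2 := by ring
  have hdif : (x * π * u.2 - x * π * u.1) / 2 = -(x * π * (u.1 - u.2) / 2) := by ring
  rw [hexSine, cos_sub_cos, hsum, hdif, sin_neg]
  ring

lemma abs_hexSine_add_one_sub_le {x : ℝ} (hx : 0 ≤ x) {u : ℝ × ℝ} (hu₂ : 0 ≤ u.2)
    (hu : u.2 ≤ u.1) : |hexSine (x + 1) u - hexSine x u| ≤ π * u.2 * (1 + x * π * u.1) := by
  set a := π * u.2
  set b := π * u.1
  have ha : 0 ≤ a := by positivity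
  have hab : a ≤ b := mul_le_mul_of_nonneg_left hu pi_pos.le
  have hdiff : hexSine (x + 1) u - hexSine x u =
      ((sin ((x + 1) * a) - sin (x * a)) * (cos ((x + 1) * a) - cos ((x + 1) * b)) +
        sin (x * a) * ((cos ((x + 1) * a) - cos (x * a)) - (cos ((x + 1) * b) - cos (x * b)))) /
        2 := by
    simp only [hexSine_eq, a, b]
    ring_nf
  have hstep (f : ℝ → ℝ) (hf : ∀ y z, |f y - f z| ≤ |y - z|) (c : ℝ) (hc : 0 ≤ c) :
      |f ((x + 1) * c) - f (x * c)| ≤ c := by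
    simpa [← sub_mul, abs_of_nonneg hc] using hf ((x + 1) * c) (x * c)
  have hcos_sub : |cos ((x + 1) * a) - cos ((x + 1) * b)| ≤ 2 := by
    linarith [abs_sub (cos ((x + 1) * a)) (cos ((x + 1) * b)), abs_cos_le_one ((x + 1) * a),
      abs_cos_le_one ((x + 1) * b)]
  have hsin : |sin (x * a)| ≤ x * a := (abs_sin_le_abs).trans_eq (abs_of_nonneg (by positivity))
  have hcos_sub_sub : |(cos ((x + 1) * a) - cos (x * a)) - (cos ((x + 1) * b) - cos (x * b))| ≤ 2 * b := by
    have hca := hstep cos abs_cos_sub_cos_le a ha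
    have hcb := hstep cos abs_cos_sub_cos_le b (ha.trans hab)
    linarith [abs_sub (cos ((x + 1) * a) - cos (x * a)) (cos ((x + 1) * b) - cos (x * b))]
  rw [hdiff, abs_div, abs_two, div_le_iff₀ two_pos]
  calc _ ≤ a * 2 + x * a * (2 * b) := (abs_add_le _ _).trans <| by
        rw [abs_mul, abs_mul]
        gcongr
        exact hstep sin abs_sin_sub_sin_le a ha
    _ = a * (1 + x * b) * 2 := by ring
    _ = _ := by simp only [a, b]; ring

lemma two_mul_min_le_sin_pi_mul {x : ℝ} (h₀ : 0 ≤ x) (h₁ : x ≤ 1) :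
    2 * min x (1 - x) ≤ sin (π * x) := by
  have jordan {y : ℝ} (hy₀ : 0 ≤ y) (hy : y ≤ 1 / 2) : 2 * y ≤ sin (π * y) := by
    have := mul_le_sin (x := π * y) (by positivity) (by nlinarith [pi_pos])
    rwa [← mul_assoc, div_mul_cancel₀ _ pi_ne_zero] at this
  rcases le_total x (1 / 2) with hx | hx
  · exact (mul_le_mul_of_nonneg_left (min_le_left _ _) zero_le_two).trans (jordan h₀ hx)
  · rw [← sin_pi_sub, ← mul_one_sub]
    exact (mul_le_mul_of_nonneg_left (min_le_right _ _) zero_le_two).trans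
      (jordan (by linarith) (by linarith))

lemma hexSine_one_ge {u : ℝ × ℝ} (hu₂ : 0 ≤ u.2) (hu : u.2 ≤ u.1 / 3) (hu₁ : u.1 ≤ 1) :
    8 / 9 * u.2 * u.1 ^ 2 ≤ hexSine 1 u := by
  have hsin₁ : 2 * u.2 ≤ sin (1 * π * u.2) := by
    have := two_mul_min_le_sin_pi_mul hu₂ (by linarith)
    rw [one_mul]
    rwa [min_eq_left (by linarith)] at this
  have hsin_ge {x : ℝ} (hx : u.1 / 3 ≤ x) (hx' : u.1 / 3 ≤ 1 - x) : 2 / 3 * u.1 ≤ sin (π * x) :=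
    le_trans (by linarith [le_min hx hx'])
      (two_mul_min_le_sin_pi_mul (by linarith) (by linarith))
  have hsin₂ : 2 / 3 * u.1 ≤ sin (1 * π * (u.1 + u.2) / 2) := by
    rw [one_mul, mul_div_assoc]
    exact hsin_ge (by linarith) (by linarith)
  have hsin₃ : 2 / 3 * u.1 ≤ sin (1 * π * (u.1 - u.2) / 2) := by
    rw [one_mul, mul_div_assoc]
    exact hsin_ge (by linarith) (by linarith)
  have hu₁₀ : 0 ≤ 2 / 3 * u.1 := by linarith
  calc 8 / 9 * u.2 * u.1 ^ 2 = 2 * u.2 * (2 / 3 * u.1) * (2 / 3 * u.1) := by ring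
    _ ≤ _ := mul_le_mul (mul_le_mul hsin₁ hsin₂ hu₁₀ (by linarith)) hsin₃ hu₁₀
        (mul_nonneg (by linarith) (hu₁₀.trans hsin₂))

lemma abs_sum_cesaroA_mul_DstarK_le {δ : ℝ} (hδ : 0 ≤ δ) {n : ℕ} {u : ℝ × ℝ} (hu : u ∈ GammaT)
    (hn : 1 / ((n : ℝ) + 1) ≤ u.1) :
    |∑ k ∈ Finset.range (n + 1), cesaroA (δ - 1) (n - k) * DstarK k u| ≤
      9 * π * (1 + π) / 8 * cesaroA δ n * ((n : ℝ) + 1) * u.1⁻¹ := by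
  obtain ⟨hu₂, hu, -, hu₁⟩ := hu
  have hA : 0 ≤ cesaroA δ n := zero_le_one.trans (one_le_cesaroA hδ n)
  have hu₁₀ : 0 < u.1 := (by positivity : (0 : ℝ) < 1 / ((n : ℝ) + 1)).trans_le hn
  have hnu : 1 ≤ ((n : ℝ) + 1) * u.1 := by rwa [div_le_iff₀ (by positivity), mul_comm] at hn
  rcases hu₂.eq_or_lt with hu₂₀ | hu₂₀
  · have hD : hexSine 1 u = 0 := by simp [hexSine, ← hu₂₀]
    simp only [DstarK_eq_hexSine, hD, div_zero, mul_zero, Finset.sum_const_zero, abs_zero]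
    positivity
  set M := π * (1 + π) * u.2 * (((n : ℝ) + 1) * u.1)
  have hD := hexSine_one_ge hu₂ hu hu₁
  have hDpos : 0 < hexSine 1 u := lt_of_lt_of_le (by positivity) hD
  have hstep : ∀ k ∈ Finset.range (n + 1), |hexSine (k + 1) u - hexSine k u| ≤ M := by
    intro k hk
    have hkn : (k : ℝ) ≤ n := by exact_mod_cast Nat.lt_succ_iff.mp (Finset.mem_range.mp hk)
    have hk : 1 + k * π * u.1 ≤ (1 + π) * (((n : ℝ) + 1) * u.1) := by
      have := mul_le_mul_of_nonneg_right (hkn.trans (le_add_of_nonneg_right zero_le_one))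
        (by positivity : 0 ≤ π * u.1)
      linarith
    calc _ ≤ π * u.2 * (1 + k * π * u.1) :=
          abs_hexSine_add_one_sub_le k.cast_nonneg hu₂ (by linarith)
      _ ≤ π * u.2 * ((1 + π) * (((n : ℝ) + 1) * u.1)) := by gcongr
      _ = M := by ring
  have hnum : |∑ k ∈ Finset.range (n + 1), cesaroA (δ - 1) (n - k) *
      (hexSine (k + 1) u - hexSine k u)| ≤ cesaroA δ n * M := by
    calc _ ≤ ∑ k ∈ Finset.range (n + 1), cesaroA (δ - 1) (n - k) * M := by
          refine (Finset.abs_sum_le_sum_abs _ _).trans (Finset.sum_le_sum fun k hk => ?_)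
          rw [abs_mul, abs_of_nonneg (cesaroA_nonneg (by linarith) _)]
          exact mul_le_mul_of_nonneg_left (hstep k hk) (cesaroA_nonneg (by linarith) _)
      _ = cesaroA δ n * M := by rw [← Finset.sum_mul, sum_range_cesaroA_sub_one]
  simp_rw [DstarK_eq_hexSine, mul_div_assoc', ← Finset.sum_div]
  rw [abs_div, abs_of_pos hDpos, div_le_iff₀ hDpos]
  calc _ ≤ cesaroA δ n * M := hnum
    _ = 9 * π * (1 + π) / 8 * cesaroA δ n * ((n : ℝ) + 1) * u.1⁻¹ * (8 / 9 * u.2 * u.1 ^ 2) := by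
        field_simp
        ring
    _ ≤ _ := by gcongr

lemma setIntegral_Icc_prod_Icc_inv_fst {a b : ℝ} (ha : 0 < a) (hab : a ≤ b) {c d : ℝ}
    (hcd : c ≤ d) : ∫ u in Icc a b ×ˢ Icc c d, u.1⁻¹ = log (b / a) * (d - c) := by
  have := setIntegral_prod_mul (μ := volume) (ν := volume) (fun x : ℝ => x⁻¹) (fun _ : ℝ => (1 : ℝ))
    (Icc a b) (Icc c d)
  simp only [mul_one, ← Measure.volume_eq_prod] at this
  rw [this, integral_Icc_eq_integral_Ioc, ← intervalIntegral.integral_of_le hab,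
    integral_inv_of_pos ha (ha.trans_le hab)]
  simp [hcd]

lemma setIntegral_le_of_le_mul_inv_fst {s : Set (ℝ × ℝ)} (hs : MeasurableSet s) {a b c d : ℝ}
    (ha : 0 < a) (hab : a ≤ b) (hcd : c ≤ d) (hsub : s ⊆ Icc a b ×ˢ Icc c d) {M : ℝ} (hM : 0 ≤ M)
    {f : ℝ × ℝ → ℝ} (hf₀ : ∀ u ∈ s, 0 ≤ f u) (hf : ∀ u ∈ s, f u ≤ M * u.1⁻¹) :
    ∫ u in s, f u ≤ M * log (b / a) * (d - c) := by
  have hint : IntegrableOn (fun u : ℝ × ℝ => M * u.1⁻¹) (Icc a b ×ˢ Icc c d) :=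
    (continuousOn_const.mul (continuous_fst.continuousOn.inv₀ fun u hu =>
      (ha.trans_le hu.1.1).ne')).integrableOn_compact (isCompact_Icc.prod isCompact_Icc)
  calc ∫ u in s, f u ≤ ∫ u in s, M * u.1⁻¹ :=
        integral_mono_of_nonneg (ae_restrict_of_forall_mem hs hf₀) (hint.mono_set hsub)
          (ae_restrict_of_forall_mem hs hf)
    _ ≤ ∫ u in Icc a b ×ˢ Icc c d, M * u.1⁻¹ :=
        setIntegral_mono_set hint (ae_restrict_of_forall_mem
          (measurableSet_Icc.prod measurableSet_Icc) fun u hu =>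
            mul_nonneg hM (inv_nonneg.2 (ha.le.trans hu.1.1))) hsub.eventuallyLE
    _ = M * log (b / a) * (d - c) := by
        rw [integral_const_mul, setIntegral_Icc_prod_Icc_inv_fst ha hab hcd, mul_assoc]

lemma measurableSet_GammaT : MeasurableSet GammaT := by
  unfold GammaT
  measurability

theorem stmt_13 :
    ∀ δ : ℝ, 0 < δ → δ < 1 → ∃ C : ℝ, 0 < C ∧
      ∀ n : ℕ, 1 ≤ n →
        (1 / cesaroA δ n) *
            ∫ u in GammaT ∩
                {u : ℝ × ℝ | 1 / ((n : ℝ) + 1) ≤ u.1 ∧ u.2 ≤ 1 / (3 * ((n : ℝ) + 1))},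
              |∑ k ∈ Finset.range (n + 1), cesaroA (δ - 1) (n - k) * DstarK k u| ≤
          C * Real.log (n + 1) := by
  intro δ hδ _
  refine ⟨3 * π * (1 + π) / 8, by positivity, fun n _ => ?_⟩
  have hA : 0 < cesaroA δ n := zero_lt_one.trans_le (one_le_cesaroA hδ.le n)
  have hs : MeasurableSet (GammaT ∩
      {u : ℝ × ℝ | 1 / ((n : ℝ) + 1) ≤ u.1 ∧ u.2 ≤ 1 / (3 * ((n : ℝ) + 1))}) :=
    measurableSet_GammaT.inter (by measurability)
  have hsub : GammaT ∩ {u : ℝ × ℝ | 1 / ((n : ℝ) + 1) ≤ u.1 ∧ u.2 ≤ 1 / (3 * ((n : ℝ) + 1))} ⊆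
      Icc (1 / ((n : ℝ) + 1)) 1 ×ˢ Icc 0 (1 / (3 * ((n : ℝ) + 1))) :=
    fun u ⟨hΓ, hn₁, hn₂⟩ => ⟨⟨hn₁, hΓ.2.2.2⟩, hΓ.1, hn₂⟩
  have hint := setIntegral_le_of_le_mul_inv_fst hs (by positivity)
    (div_le_one_of_le₀ (by simp) (by positivity)) (by positivity) hsub (by positivity)
    (fun u _ => abs_nonneg _) fun u hu => abs_sum_cesaroA_mul_DstarK_le hδ.le hu.1 hu.2.1
  calc _ ≤ 1 / cesaroA δ n * (9 * π * (1 + π) / 8 * cesaroA δ n * ((n : ℝ) + 1) *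
        log (1 / (1 / ((n : ℝ) + 1))) * (1 / (3 * ((n : ℝ) + 1)) - 0)) := by gcongr
    _ = 3 * π * (1 + π) / 8 * log (n + 1) := by
        rw [one_div_one_div]
        field_simp
        ring
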